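/- (Orthogonal additivity of the Sibson functional.) Let A, B be nonempty finite types, λ > 1 real, I a finite index type, (c_i)_{i∈I} nonnegative reals, (ρ_i)_{i∈I} density matrices indexed by A×B, and (P_i)_{i∈I} Hermitian projection matrices indexed by B that are pairwise orthogonal (P_i·P_j = 0 for i ≠ j) and satisfy (1_A⊗P_i)·ρ_i·(1_A⊗P_i) = ρ_i for every i. Then Tr[ ( Tr_A( (∑_{i∈I} c_i·ρ_i)^{λ} ) )^{1/λ} ] = ∑_{i∈I} c_i · Tr[ ( Tr_A( ρ_i^{λ} ) )^{1/λ} ]. -/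

import Mathlib

open scoped Kronecker
open Matrix
open scoped ComplexOrder

/-- Apply a real function to a Hermitian matrix via the functional calculus
(spectral decomposition); returns 0 for non-Hermitian input. -/
noncomputable def matFun {n : Type*} [Fintype n] [DecidableEq n]
    (M : Matrix n n ℂ) (f : ℝ → ℝ) : Matrix n n ℂ :=
  if h : M.IsHermitian then
    (h.eigenvectorUnitary : Matrix n n ℂ) *
      Matrix.diagonal (fun i => (f (h.eigenvalues i) : ℂ)) *
      (star (h.eigenvectorUnitary : Matrix n n ℂ))
  else 0

/-- Real power of a (Hermitian positive semidefinite) matrix, with the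
convention `0 ^ t = 0` for every real `t`. -/
noncomputable def mpow {n : Type*} [Fintype n] [DecidableEq n]
    (M : Matrix n n ℂ) (t : ℝ) : Matrix n n ℂ :=
  matFun M (fun x => if x = 0 then 0 else x ^ t)

/-- Real part of the trace. -/
noncomputable def trR {n : Type*} [Fintype n] (M : Matrix n n ℂ) : ℝ :=
  (Matrix.trace M).re

/-- Partial trace over the first tensor factor. -/
noncomputable def ptrA {A B : Type*} [Fintype A]
    (M : Matrix (A × B) (A × B) ℂ) : Matrix B B ℂ :=
  Matrix.of fun b b' => ∑ a : A, M (a, b) (a, b')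

/-- Quantum Rényi divergence of order `lam`. -/
noncomputable def renyiD {n : Type*} [Fintype n] [DecidableEq n]
    (lam : ℝ) (X Y : Matrix n n ℂ) : ℝ :=
  (1 / (lam - 1)) * Real.log (trR (mpow X lam * mpow Y (1 - lam)))

/-- The quantity `K_lam(A⟩B)_ρ`: infimum over positive definite density
matrices `σ` on `B` of `D_lam(ρ ‖ 1_A ⊗ σ)`. -/
noncomputable def Kinf {A B : Type*} [Fintype A] [Fintype B]
    [DecidableEq A] [DecidableEq B]
    (lam : ℝ) (ρ : Matrix (A × B) (A × B) ℂ) : ℝ :=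
  ⨅ σ : {σ : Matrix B B ℂ // σ.PosDef ∧ σ.trace = 1},
    renyiD lam ρ ((1 : Matrix A A ℂ) ⊗ₖ (σ : Matrix B B ℂ))

/-- The CPTP map determined by a finite family of Kraus operators. -/
noncomputable def krausMap {ι n m : Type*} [Fintype ι] [Fintype n] [Fintype m]
    (K : ι → Matrix m n ℂ) (X : Matrix n n ℂ) : Matrix m m ℂ :=
  ∑ j, K j * X * (K j)ᴴ

/-- Trace of the positive part of a Hermitian matrix. -/
noncomputable def trPos {n : Type*} [Fintype n] [DecidableEq n]
    (X : Matrix n n ℂ) : ℝ :=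
  if h : X.IsHermitian then ∑ i, max (h.eigenvalues i) 0 else 0

/-- Binary Rényi quantity `𝔻_lam(α‖β)`. -/
noncomputable def binD (lam α β : ℝ) : ℝ :=
  (1 / (lam - 1)) *
    Real.log (α ^ lam * β ^ (1 - lam) + (1 - α) ^ lam * (β⁻¹ - β) ^ (1 - lam))

/-! The projections `1_A ⊗ Pᵢ` are pairwise orthogonal and support the `ρᵢ`, so the summands
`cᵢ ρᵢ` are mutually orthogonal positive matrices. A function `f` with `f 0 = 0` applied through the
functional calculus is additive on such sums: on the finite joint spectrum `f` agrees with a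
polynomial without constant term, and powers of a sum of mutually orthogonal matrices are sums of
powers. Hence `(∑ cᵢ ρᵢ)^λ = ∑ cᵢ^λ ρᵢ^λ`. Partial traces over `A` of matrices supported on
`1_A ⊗ Pᵢ` are supported on `Pᵢ`, so the same argument applies to the outer power `1/λ`, and
`(cᵢ^λ)^{1/λ} = cᵢ`. -/

section Orthogonal

open Polynomial

variable {R S : Type*} [CommSemiring R] [Semiring S] [Algebra R S] {a b : S}

theorem add_pow_succ_of_mul_eq_zero (hab : a * b = 0) (hba : b * a = 0) (k : ℕ) :
    (a + b) ^ (k + 1) = a ^ (k + 1) + b ^ (k + 1) := by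
  induction k with
  | zero => simp
  | succ k ih =>
    have hab' : a ^ (k + 1) * b = 0 := by rw [pow_succ, mul_assoc, hab, mul_zero]
    have hba' : b ^ (k + 1) * a = 0 := by rw [pow_succ, mul_assoc, hba, mul_zero]
    rw [pow_succ, ih, add_mul, mul_add, mul_add, hab', hba', add_zero, zero_add, ← pow_succ,
      ← pow_succ]

theorem Polynomial.aeval_add_of_mul_eq_zero {p : R[X]} (hp : p.coeff 0 = 0)
    (hab : a * b = 0) (hba : b * a = 0) : aeval (a + b) p = aeval a p + aeval b p := by
  simp only [aeval_eq_sum_range, ← Finset.sum_add_distrib]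
  refine Finset.sum_congr rfl fun k _ => ?_
  cases k with
  | zero => simp [hp]
  | succ k => rw [add_pow_succ_of_mul_eq_zero hab hba, smul_add]

theorem Polynomial.mul_aeval_of_mul_eq_self {p : R[X]} (hp : p.coeff 0 = 0) (hba : b * a = a) :
    b * aeval a p = aeval a p := by
  obtain ⟨q, rfl⟩ := X_dvd_iff.mpr hp
  rw [map_mul, aeval_X, ← mul_assoc, hba]

end Orthogonal

open Polynomial in
theorem Lagrange.coeff_zero_interpolate_id {s : Finset ℝ} (h0 : 0 ∈ s) (f : ℝ → ℝ) :
    (Lagrange.interpolate s id f).coeff 0 = f 0 := by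
  rw [coeff_zero_eq_eval_zero]
  exact Lagrange.eval_interpolate_at_node f Function.injective_id.injOn h0

open Polynomial in
theorem cfc_eq_aeval_interpolate {A : Type*} [Ring A] [StarRing A] [Algebra ℝ A]
    [TopologicalSpace A] [ContinuousFunctionalCalculus ℝ A IsSelfAdjoint]
    {a : A} (ha : IsSelfAdjoint a) {s : Finset ℝ} (hs : spectrum ℝ a ⊆ s) (f : ℝ → ℝ) :
    cfc f a = aeval a (Lagrange.interpolate s id f) := by
  rw [← cfc_polynomial _ a ha]
  exact cfc_congr fun x hx =>
    (Lagrange.eval_interpolate_at_node f Function.injective_id.injOn (hs hx)).symm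

namespace Matrix

open Polynomial

variable {n 𝕜 : Type*} [Fintype n] [DecidableEq n] [RCLike 𝕜]

theorem exists_cfc_eq_aeval (S : Finset (Matrix n n 𝕜)) {f : ℝ → ℝ} (hf : f 0 = 0) :
    ∃ p : ℝ[X], p.coeff 0 = 0 ∧ ∀ X ∈ S, X.IsHermitian → cfc f X = aeval X p := by
  classical
  let s := S.biUnion (fun X => X.finite_real_spectrum.toFinset) ∪ {0}
  refine ⟨Lagrange.interpolate s id f,
    (Lagrange.coeff_zero_interpolate_id (by simp [s]) f).trans hf, fun X hXS hX => ?_⟩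
  refine cfc_eq_aeval_interpolate hX.isSelfAdjoint (fun x hx => ?_) f
  exact Finset.mem_union_left _ (Finset.mem_biUnion.mpr ⟨X, hXS, by simpa using hx⟩)

theorem IsHermitian.cfc_add_of_mul_eq_zero {X Y : Matrix n n 𝕜} (hX : X.IsHermitian)
    (hY : Y.IsHermitian) (hXY : X * Y = 0) (hYX : Y * X = 0) {f : ℝ → ℝ} (hf : f 0 = 0) :
    cfc f (X + Y) = cfc f X + cfc f Y := by
  classical
  obtain ⟨p, hp, hcfc⟩ := exists_cfc_eq_aeval {X, Y, X + Y} hf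
  rw [hcfc X (by simp) hX, hcfc Y (by simp) hY, hcfc (X + Y) (by simp) (hX.add hY)]
  exact aeval_add_of_mul_eq_zero hp hXY hYX

theorem cfc_sum_of_pairwise_mul_eq_zero {ι : Type*} {X : ι → Matrix n n 𝕜}
    (hX : ∀ i, (X i).IsHermitian) (hXX : Pairwise fun i j => X i * X j = 0) {f : ℝ → ℝ}
    (hf : f 0 = 0) (s : Finset ι) : cfc f (∑ i ∈ s, X i) = ∑ i ∈ s, cfc f (X i) := by
  classical
  induction s using Finset.induction_on with
  | empty => simp [hf]
  | insert i s his ih =>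
    have hne : ∀ j ∈ s, i ≠ j := fun j hj hij => his (hij ▸ hj)
    rw [Finset.sum_insert his, Finset.sum_insert his,
      (hX i).cfc_add_of_mul_eq_zero (isSelfAdjoint_sum s fun j _ => hX j)
        (by rw [Finset.mul_sum]; exact Finset.sum_eq_zero fun j hj => hXX (hne j hj))
        (by rw [Finset.sum_mul]; exact Finset.sum_eq_zero fun j hj => hXX (hne j hj).symm) hf,
      ih]

theorem IsHermitian.mul_cfc_of_mul_eq_self {Q X : Matrix n n 𝕜} (hX : X.IsHermitian)
    (hQX : Q * X = X) {f : ℝ → ℝ} (hf : f 0 = 0) : Q * cfc f X = cfc f X := by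
  obtain ⟨p, hp, hcfc⟩ := exists_cfc_eq_aeval {X} hf
  rw [hcfc X (Finset.mem_singleton_self X) hX]
  exact mul_aeval_of_mul_eq_self hp hQX

end Matrix

section Power

open scoped MatrixOrder

variable {n : Type*} [Fintype n] [DecidableEq n]

theorem matFun_eq_cfc (M : Matrix n n ℂ) (f : ℝ → ℝ) : matFun M f = cfc f M := by
  by_cases hM : M.IsHermitian
  · rw [matFun, dif_pos hM, hM.cfc_eq, IsHermitian.cfc, Unitary.conjStarAlgAut_apply]
    rfl
  · rw [matFun, dif_neg hM]
    exact (cfc_apply_of_not_predicate M hM).symm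

theorem mpow_eq_cfc_rpow (M : Matrix n n ℂ) {t : ℝ} (ht : t ≠ 0) :
    mpow M t = cfc (fun x : ℝ => x ^ t) M := by
  rw [mpow, matFun_eq_cfc]
  congr 1
  funext x
  split_ifs with hx
  · rw [hx, Real.zero_rpow ht]
  · rfl

theorem Matrix.PosSemidef.mpow {M : Matrix n n ℂ} (hM : M.PosSemidef) (t : ℝ) :
    (mpow M t).PosSemidef := by
  rw [_root_.mpow, matFun_eq_cfc, ← nonneg_iff_posSemidef]
  refine cfc_nonneg fun x hx => ?_
  split_ifs
  · exact le_rfl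
  · exact Real.rpow_nonneg (spectrum_nonneg_of_nonneg hM.nonneg hx) t

theorem Matrix.IsHermitian.mul_mpow_of_mul_eq_self {Q M : Matrix n n ℂ} (hM : M.IsHermitian)
    (hQM : Q * M = M) (t : ℝ) : Q * mpow M t = mpow M t := by
  rw [mpow, matFun_eq_cfc]
  exact hM.mul_cfc_of_mul_eq_self hQM (if_pos rfl)

theorem mpow_smul {M : Matrix n n ℂ} (hM : M.PosSemidef) {c : ℝ} (hc : 0 ≤ c) {t : ℝ}
    (ht : t ≠ 0) : mpow (c • M) t = (c ^ t) • mpow M t := by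
  have hfin := M.finite_real_spectrum
  rw [mpow_eq_cfc_rpow _ ht, mpow_eq_cfc_rpow _ ht,
    ← cfc_comp_smul c _ M ((hfin.image _).continuousOn _),
    ← cfc_smul _ _ _ (hfin.continuousOn _)]
  exact cfc_congr fun x hx => Real.mul_rpow hc (spectrum_nonneg_of_nonneg hM.nonneg hx)

theorem mpow_sum_smul_of_pairwise_mul_eq_zero {ι : Type*} [Fintype ι] {X : ι → Matrix n n ℂ}
    (hX : ∀ i, (X i).PosSemidef) (hXX : Pairwise fun i j => X i * X j = 0) {c : ι → ℝ}
    (hc : ∀ i, 0 ≤ c i) {t : ℝ} (ht : t ≠ 0) :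
    mpow (∑ i, c i • X i) t = ∑ i, c i ^ t • mpow (X i) t := by
  rw [mpow_eq_cfc_rpow _ ht, Matrix.cfc_sum_of_pairwise_mul_eq_zero
    (fun i => (IsSelfAdjoint.all (c i)).smul (hX i).1)
    (fun i j hij => show c i • X i * c j • X j = 0 by
      rw [smul_mul_smul_comm, hXX hij, smul_zero]) (f := fun x : ℝ => x ^ t)
    (Real.zero_rpow ht)]
  exact Finset.sum_congr rfl fun i _ => by
    rw [← mpow_eq_cfc_rpow _ ht, mpow_smul (hX i) (hc i) ht]

end Power

theorem Matrix.IsHermitian.mul_eq_zero_of_mul_eq_self {n 𝕜 : Type*} [Fintype n] [RCLike 𝕜]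
    {X Y P R : Matrix n n 𝕜} (hX : X.IsHermitian) (hP : P.IsHermitian) (hPX : P * X = X)
    (hRY : R * Y = Y) (hPR : P * R = 0) : X * Y = 0 := by
  have hXP : X * P = X :=
    calc X * P = (P * X)ᴴ := by rw [conjTranspose_mul, hX.eq, hP.eq]
      _ = X := by rw [hPX, hX.eq]
  calc X * Y = X * P * (R * Y) := by rw [hXP, hRY]
    _ = X * (P * R) * Y := by simp only [Matrix.mul_assoc]
    _ = 0 := by rw [hPR, Matrix.mul_zero, Matrix.zero_mul]

theorem mul_eq_self_of_mul_mul_eq_self {S : Type*} [Semigroup S] {q m : S}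
    (hq : IsIdempotentElem q) (h : q * m * q = m) : q * m = m := by
  rw [← h, ← mul_assoc, ← mul_assoc, hq.eq]

theorem Matrix.IsHermitian.kronecker {m n 𝕜 : Type*} [RCLike 𝕜] {X : Matrix m m 𝕜}
    {Y : Matrix n n 𝕜} (hX : X.IsHermitian) (hY : Y.IsHermitian) : (X ⊗ₖ Y).IsHermitian := by
  rw [IsHermitian, conjTranspose_kronecker, hX.eq, hY.eq]

theorem Matrix.one_kronecker_mul_one_kronecker {m n α : Type*} [Fintype m] [Fintype n]
    [DecidableEq m] [CommSemiring α] (P P' : Matrix n n α) :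
    ((1 : Matrix m m α) ⊗ₖ P) * ((1 : Matrix m m α) ⊗ₖ P') =
      (1 : Matrix m m α) ⊗ₖ (P * P') := by
  rw [← mul_kronecker_mul, Matrix.one_mul]

section PartialTrace

variable {A B : Type*} [Fintype A]

theorem ptrA_eq_sum_submatrix (M : Matrix (A × B) (A × B) ℂ) :
    ptrA M = ∑ a, M.submatrix (Prod.mk a) (Prod.mk a) := by
  ext b b'
  simp [ptrA, Matrix.sum_apply]

theorem ptrA_sum {ι : Type*} (s : Finset ι) (M : ι → Matrix (A × B) (A × B) ℂ) :
    ptrA (∑ i ∈ s, M i) = ∑ i ∈ s, ptrA (M i) := by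
  ext b b'
  simp only [ptrA, Matrix.of_apply, Matrix.sum_apply]
  exact Finset.sum_comm

theorem ptrA_smul (c : ℝ) (M : Matrix (A × B) (A × B) ℂ) : ptrA (c • M) = c • ptrA M := by
  ext b b'
  simp [ptrA, Finset.smul_sum]

theorem Matrix.PosSemidef.ptrA {M : Matrix (A × B) (A × B) ℂ} (hM : M.PosSemidef) :
    (ptrA M).PosSemidef := by
  rw [ptrA_eq_sum_submatrix]
  exact posSemidef_sum _ fun a _ => hM.submatrix _

theorem ptrA_one_kronecker_mul [Fintype B] [DecidableEq A] (P : Matrix B B ℂ)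
    (M : Matrix (A × B) (A × B) ℂ) :
    ptrA (((1 : Matrix A A ℂ) ⊗ₖ P) * M) = P * ptrA M := by
  ext b b'
  simp only [ptrA, Matrix.mul_apply, kroneckerMap_apply, Matrix.one_apply, ite_mul, one_mul,
    zero_mul, Fintype.sum_prod_type, Finset.sum_ite_irrel, Finset.sum_const_zero,
    Finset.sum_ite_eq, Finset.mem_univ, ↓reduceIte, of_apply, Finset.mul_sum]
  exact Finset.sum_comm

end PartialTrace

theorem sibson_orthogonal_additivity_general
    {A B : Type*} [Fintype A] [Fintype B] [DecidableEq A] [DecidableEq B]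
    (lam : ℝ) (hlam : 1 < lam)
    {I : Type*} [Fintype I]
    (c : I → ℝ) (hc : ∀ i, 0 ≤ c i)
    (ρ : I → Matrix (A × B) (A × B) ℂ)
    (hρ : ∀ i, (ρ i).PosSemidef ∧ (ρ i).trace = 1)
    (P : I → Matrix B B ℂ)
    (hPherm : ∀ i, (P i).IsHermitian) (hPproj : ∀ i, P i * P i = P i)
    (hPorth : ∀ i j, i ≠ j → P i * P j = 0)
    (hsupp : ∀ i, ((1 : Matrix A A ℂ) ⊗ₖ P i) * ρ i * ((1 : Matrix A A ℂ) ⊗ₖ P i) = ρ i) :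
    trR (mpow (ptrA (mpow (∑ i, ((c i : ℝ) : ℂ) • ρ i) lam)) (1 / lam)) =
      ∑ i, c i * trR (mpow (ptrA (mpow (ρ i) lam)) (1 / lam)) := by
  have hlam0 : lam ≠ 0 := (zero_lt_one.trans hlam).ne'
  have hQρ i : ((1 : Matrix A A ℂ) ⊗ₖ P i) * ρ i = ρ i :=
    mul_eq_self_of_mul_mul_eq_self (by rw [IsIdempotentElem, one_kronecker_mul_one_kronecker,
      hPproj i]) (hsupp i)
  have hρρ : Pairwise fun i j => ρ i * ρ j = 0 := fun i j hij =>
    (hρ i).1.1.mul_eq_zero_of_mul_eq_self (isHermitian_one.kronecker (hPherm i)) (hQρ i) (hQρ j)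
      (by rw [one_kronecker_mul_one_kronecker, hPorth i j hij, kronecker_zero])
  let T i := ptrA (mpow (ρ i) lam)
  have hT i : (T i).PosSemidef := ((hρ i).1.mpow lam).ptrA
  have hPT i : P i * T i = T i := by
    rw [← ptrA_one_kronecker_mul, (hρ i).1.1.mul_mpow_of_mul_eq_self (hQρ i)]
  have hTT : Pairwise fun i j => T i * T j = 0 := fun i j hij =>
    (hT i).1.mul_eq_zero_of_mul_eq_self (hPherm i) (hPT i) (hPT j) (hPorth i j hij)
  simp_rw [Complex.coe_smul]
  calc trR (mpow (ptrA (mpow (∑ i, c i • ρ i) lam)) (1 / lam))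
      = trR (mpow (∑ i, c i ^ lam • T i) (1 / lam)) := by
        rw [mpow_sum_smul_of_pairwise_mul_eq_zero (fun i => (hρ i).1) hρρ hc hlam0, ptrA_sum]
        simp only [ptrA_smul, T]
    _ = trR (∑ i, c i • mpow (T i) (1 / lam)) := by
        rw [mpow_sum_smul_of_pairwise_mul_eq_zero hT hTT (fun i => Real.rpow_nonneg (hc i) lam)
          (one_div_ne_zero hlam0)]
        simp only [one_div, Real.rpow_rpow_inv (hc _) hlam0]
    _ = ∑ i, c i * trR (mpow (T i) (1 / lam)) := by
        simp [trR, trace_sum, trace_smul]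

/-- Orthogonal additivity of the Sibson functional:
if the density matrices `ρ i` are supported on pairwise orthogonal
projections `1_A ⊗ P i` of the `B` system, then
`Tr[(Tr_A((∑ c_i ρ_i)^λ))^{1/λ}] = ∑ c_i · Tr[(Tr_A(ρ_i^λ))^{1/λ}]`. -/
theorem sibson_orthogonal_additivity
    {A B : Type*} [Fintype A] [Fintype B] [DecidableEq A] [DecidableEq B]
    [Nonempty A] [Nonempty B]
    (lam : ℝ) (hlam : 1 < lam)
    {I : Type*} [Fintype I]
    (c : I → ℝ) (hc : ∀ i, 0 ≤ c i)
    (ρ : I → Matrix (A × B) (A × B) ℂ)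
    (hρ : ∀ i, (ρ i).PosSemidef ∧ (ρ i).trace = 1)
    (P : I → Matrix B B ℂ)
    (hPherm : ∀ i, (P i).IsHermitian) (hPproj : ∀ i, P i * P i = P i)
    (hPorth : ∀ i j, i ≠ j → P i * P j = 0)
    (hsupp : ∀ i, ((1 : Matrix A A ℂ) ⊗ₖ P i) * ρ i * ((1 : Matrix A A ℂ) ⊗ₖ P i) = ρ i) :
    trR (mpow (ptrA (mpow (∑ i, ((c i : ℝ) : ℂ) • ρ i) lam)) (1 / lam)) =
      ∑ i, c i * trR (mpow (ptrA (mpow (ρ i) lam)) (1 / lam)) :=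
  sibson_orthogonal_additivity_general lam hlam c hc ρ hρ P hPherm hPproj hPorth hsupp
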